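/- arXiv:2511.00729 — 2 statements merged into one kernel-verified Lean document; each statement's English description precedes it below -/
import Mathlib

section
/- Let g ∈ SL(2,ℂ) with singular value decomposition g = U·diag(M, M⁻¹)·V where M = ‖g‖_op > 1 and U, V ∈ SU(2). Let L(g) := U e₁ ℂ and L(g⁻¹) := V⁻¹ e₂ ℂ. Then for every 0 < ε < 1 and all zℂ, wℂ ∈ ℂP¹ with d(zℂ, L(g⁻¹)) > ε and d(wℂ, L(g⁻¹)) > ε, one has d(gzℂ, gwℂ) ≤ ε⁻² ‖g‖_op⁻² d(zℂ, wℂ), and moreover d(L(g), gzℂ) ≤ ε⁻¹ ‖g‖_op⁻². -/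
noncomputable section

/-- `ℂ²` with the standard Hermitian norm. -/
abbrev C2 := EuclideanSpace ℂ (Fin 2)

/-- The distance between the lines spanned by `z` and `w`, computed on representatives:
`d(zℂ, wℂ) = |z₁w₂ - z₂w₁| / (‖z‖‖w‖)`. -/
def dCP (z w : C2) : ℝ := ‖z 0 * w 1 - z 1 * w 0‖ / (‖z‖ * ‖w‖)

/-- First standard basis vector of `ℂ²`. -/
def e1 : C2 := WithLp.toLp 2 ![1, 0]

/-- Second standard basis vector of `ℂ²`. -/
def e2 : C2 := WithLp.toLp 2 ![0, 1]

/-- The operator norm of a `2×2` complex matrix acting on `ℂ²` with the Hermitian norm. -/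
def opn (A : Matrix (Fin 2) (Fin 2) ℂ) : ℝ := ‖Matrix.toEuclideanCLM (𝕜 := ℂ) A‖

/-- The action of a matrix on a vector of `ℂ²`. -/
def mulVecE (A : Matrix (Fin 2) (Fin 2) ℂ) (z : C2) : C2 := Matrix.toEuclideanCLM (𝕜 := ℂ) A z

/-!
Write `g = U D V` with `D = diag(M, M⁻¹)`. Since `U, V ∈ SU(2)` act isometrically on `ℂP¹`,
replacing `z, w` by `Vz, Vw` reduces everything to `D`, with `L(g⁻¹)` becoming `e₂ℂ` and `L(g)`
becoming `e₁ℂ`. The determinant `z₀w₁ - z₁w₀` is scaled by `det D = 1`, while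
`d(z, e₂) > ε` gives `|z₀| > ε‖z‖`, hence `‖Dz‖ ≥ M|z₀| > Mε‖z‖`; both estimates follow.
-/

open Matrix

lemma mulVecE_apply (A : Matrix (Fin 2) (Fin 2) ℂ) (z : C2) (i : Fin 2) :
    mulVecE A z i = A i 0 * z 0 + A i 1 * z 1 := by
  simp [mulVecE, Matrix.mulVec, dotProduct, Fin.sum_univ_two]

lemma mulVecE_mul (A B : Matrix (Fin 2) (Fin 2) ℂ) (z : C2) :
    mulVecE (A * B) z = mulVecE A (mulVecE B z) := by
  simp [mulVecE]

lemma mulVecE_mul_nonsing_inv {A : Matrix (Fin 2) (Fin 2) ℂ} (hA : IsUnit A.det) (z : C2) :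
    mulVecE A (mulVecE A⁻¹ z) = z := by
  rw [← mulVecE_mul, mul_nonsing_inv A hA]
  simp [mulVecE]

lemma norm_mulVecE_of_mem_unitaryGroup {W : Matrix (Fin 2) (Fin 2) ℂ}
    (hW : W ∈ unitaryGroup (Fin 2) ℂ) (z : C2) : ‖mulVecE W z‖ = ‖z‖ :=
  ContinuousLinearMap.norm_map_of_mem_unitary (Unitary.map_mem toEuclideanCLM hW) z

lemma dCP_mulVecE_of_mem_specialUnitaryGroup {W : Matrix (Fin 2) (Fin 2) ℂ}
    (hW : W ∈ specialUnitaryGroup (Fin 2) ℂ) (z w : C2) :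
    dCP (mulVecE W z) (mulVecE W w) = dCP z w := by
  obtain ⟨hWu, hWdet⟩ := mem_specialUnitaryGroup_iff.mp hW
  have hdet : mulVecE W z 0 * mulVecE W w 1 - mulVecE W z 1 * mulVecE W w 0
      = W.det * (z 0 * w 1 - z 1 * w 0) := by
    simp only [mulVecE_apply, det_fin_two]; ring
  rw [dCP, dCP, hdet, hWdet, one_mul, norm_mulVecE_of_mem_unitaryGroup hWu,
    norm_mulVecE_of_mem_unitaryGroup hWu]

lemma norm_e1 : ‖e1‖ = 1 := by
  simp [EuclideanSpace.norm_eq, e1, Fin.sum_univ_two]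

lemma norm_e2 : ‖e2‖ = 1 := by
  simp [EuclideanSpace.norm_eq, e2, Fin.sum_univ_two]

lemma dCP_e1_left (v : C2) : dCP e1 v = ‖v 1‖ / ‖v‖ := by
  rw [dCP, norm_e1]; simp [e1]

lemma dCP_e2_right (v : C2) : dCP v e2 = ‖v 0‖ / ‖v‖ := by
  rw [dCP, norm_e2]; simp [e2]

lemma norm_pos_of_lt_dCP_e2 {ε : ℝ} (hε : 0 ≤ ε) {z : C2} (hz : ε < dCP z e2) : 0 < ‖z‖ := by
  refine (norm_nonneg z).lt_of_ne fun h => ?_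
  rw [dCP_e2_right, ← h, div_zero] at hz
  exact hz.not_ge hε

lemma mul_norm_lt_norm_apply_zero_of_lt_dCP_e2 {ε : ℝ} (hε : 0 ≤ ε) {z : C2}
    (hz : ε < dCP z e2) : ε * ‖z‖ < ‖z 0‖ := by
  have hz0 := norm_pos_of_lt_dCP_e2 hε hz
  rwa [dCP_e2_right, lt_div_iff₀ hz0] at hz

section Diagonal

variable {a b : ℂ} {ε : ℝ} {z w : C2}

lemma mulVecE_diagonal_apply (d : Fin 2 → ℂ) (z : C2) (i : Fin 2) :
    mulVecE (diagonal d) z i = d i * z i := by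
  fin_cases i <;> simp [mulVecE_apply]

lemma mul_norm_lt_norm_mulVecE_diagonal (ha : a ≠ 0) (hε : 0 ≤ ε) (hz : ε < dCP z e2) :
    ‖a‖ * (ε * ‖z‖) < ‖mulVecE (diagonal ![a, b]) z‖ :=
  calc ‖a‖ * (ε * ‖z‖) < ‖a‖ * ‖z 0‖ := mul_lt_mul_of_pos_left
        (mul_norm_lt_norm_apply_zero_of_lt_dCP_e2 hε hz) (norm_pos_iff.mpr ha)
    _ = ‖mulVecE (diagonal ![a, b]) z 0‖ := by simp [mulVecE_diagonal_apply]
    _ ≤ _ := PiLp.norm_apply_le _ 0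

lemma dCP_mulVecE_diagonal_le (ha : a ≠ 0) (hε : 0 < ε) (hz : ε < dCP z e2)
    (hw : ε < dCP w e2) :
    dCP (mulVecE (diagonal ![a, b]) z) (mulVecE (diagonal ![a, b]) w) ≤
      ‖b‖ / (‖a‖ * ε ^ 2) * dCP z w := by
  have hdet : mulVecE (diagonal ![a, b]) z 0 * mulVecE (diagonal ![a, b]) w 1
      - mulVecE (diagonal ![a, b]) z 1 * mulVecE (diagonal ![a, b]) w 0
      = a * b * (z 0 * w 1 - z 1 * w 0) := by
    simp only [mulVecE_diagonal_apply, cons_val_zero, cons_val_one, cons_val_fin_one]; ring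
  have hz0 := norm_pos_of_lt_dCP_e2 hε.le hz
  have hw0 := norm_pos_of_lt_dCP_e2 hε.le hw
  have ha0 := norm_pos_iff.mpr ha
  rw [dCP, dCP, hdet, norm_mul, norm_mul]
  calc ‖a‖ * ‖b‖ * ‖z 0 * w 1 - z 1 * w 0‖ /
        (‖mulVecE (diagonal ![a, b]) z‖ * ‖mulVecE (diagonal ![a, b]) w‖)
      ≤ ‖a‖ * ‖b‖ * ‖z 0 * w 1 - z 1 * w 0‖ / ((‖a‖ * (ε * ‖z‖)) * (‖a‖ * (ε * ‖w‖))) := by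
        gcongr
        · exact (mul_norm_lt_norm_mulVecE_diagonal ha hε.le hz).le
        · exact (mul_norm_lt_norm_mulVecE_diagonal ha hε.le hw).le
    _ = _ := by field_simp

lemma dCP_e1_mulVecE_diagonal_le (ha : a ≠ 0) (hε : 0 < ε) (hz : ε < dCP z e2) :
    dCP e1 (mulVecE (diagonal ![a, b]) z) ≤ ‖b‖ / (‖a‖ * ε) := by
  have hz0 := norm_pos_of_lt_dCP_e2 hε.le hz
  have ha0 := norm_pos_iff.mpr ha
  rw [dCP_e1_left, mulVecE_diagonal_apply]
  calc ‖![a, b] 1 * z 1‖ / ‖mulVecE (diagonal ![a, b]) z‖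
      ≤ ‖b‖ * ‖z‖ / (‖a‖ * (ε * ‖z‖)) := by
        simp only [cons_val_one, cons_val_fin_one, norm_mul]
        gcongr
        · exact PiLp.norm_apply_le z 1
        · exact (mul_norm_lt_norm_mulVecE_diagonal ha hε.le hz).le
    _ = ‖b‖ / (‖a‖ * ε) := by field_simp

end Diagonal

theorem stmt_3_general (g : Matrix.SpecialLinearGroup (Fin 2) ℂ)
    (U V : Matrix (Fin 2) (Fin 2) ℂ)
    (hU : U ∈ Matrix.specialUnitaryGroup (Fin 2) ℂ)
    (hV : V ∈ Matrix.specialUnitaryGroup (Fin 2) ℂ)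
    (hM : 1 < opn (↑g))
    (hg : (↑g : Matrix (Fin 2) (Fin 2) ℂ) =
      U * Matrix.diagonal ![((opn (↑g) : ℝ) : ℂ), (((opn (↑g))⁻¹ : ℝ) : ℂ)] * V)
    (ε : ℝ) (hε0 : 0 < ε)
    (z w : C2)
    (hzY : ε < dCP z (mulVecE V⁻¹ e2)) (hwY : ε < dCP w (mulVecE V⁻¹ e2)) :
    dCP (mulVecE (↑g) z) (mulVecE (↑g) w) ≤ ε⁻¹ ^ 2 * ((opn (↑g)) ^ 2)⁻¹ * dCP z w ∧
    dCP (mulVecE U e1) (mulVecE (↑g) z) ≤ ε⁻¹ * ((opn (↑g)) ^ 2)⁻¹ := by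
  set M := opn (↑g : Matrix (Fin 2) (Fin 2) ℂ)
  have hM0 : 0 < M := one_pos.trans hM
  have hMC : ((M : ℝ) : ℂ) ≠ 0 := Complex.ofReal_ne_zero.mpr hM0.ne'
  have hgv (v : C2) : mulVecE g v = mulVecE U (mulVecE (diagonal ![(M : ℂ), ((M⁻¹ : ℝ) : ℂ)])
      (mulVecE V v)) := by
    rw [hg, mulVecE_mul, mulVecE_mul]
  have hVe2 : mulVecE V (mulVecE V⁻¹ e2) = e2 := mulVecE_mul_nonsing_inv
    (by rw [(mem_specialUnitaryGroup_iff.mp hV).2]; exact isUnit_one) e2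
  have hzY' : ε < dCP (mulVecE V z) e2 := by
    rwa [← hVe2, dCP_mulVecE_of_mem_specialUnitaryGroup hV]
  have hwY' : ε < dCP (mulVecE V w) e2 := by
    rwa [← hVe2, dCP_mulVecE_of_mem_specialUnitaryGroup hV]
  have hnormM : ‖((M : ℝ) : ℂ)‖ = M := Complex.norm_of_nonneg hM0.le
  have hnormM' : ‖((M⁻¹ : ℝ) : ℂ)‖ = M⁻¹ := Complex.norm_of_nonneg (inv_nonneg.mpr hM0.le)
  rw [hgv, hgv, dCP_mulVecE_of_mem_specialUnitaryGroup hU,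
    dCP_mulVecE_of_mem_specialUnitaryGroup hU]
  constructor
  · calc _ ≤ _ := dCP_mulVecE_diagonal_le hMC hε0 hzY' hwY'
      _ = _ := by
        rw [dCP_mulVecE_of_mem_specialUnitaryGroup hV, hnormM, hnormM']
        field_simp
  · calc _ ≤ _ := dCP_e1_mulVecE_diagonal_le hMC hε0 hzY'
      _ = _ := by
        rw [hnormM, hnormM']
        field_simp

/-- Contraction estimate away from the repelling direction: if g = U·diag(M,M⁻¹)·V with
M = ‖g‖_op > 1 and U,V ∈ SU(2), then for 0 < ε < 1 and lines zℂ, wℂ at distance > ε from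
L(g⁻¹) = V⁻¹e₂ℂ we have d(gzℂ,gwℂ) ≤ ε⁻²‖g‖⁻²d(zℂ,wℂ) and d(L(g), gzℂ) ≤ ε⁻¹‖g‖⁻²,
where L(g) = Ue₁ℂ. -/
theorem stmt_3 (g : Matrix.SpecialLinearGroup (Fin 2) ℂ)
    (U V : Matrix (Fin 2) (Fin 2) ℂ)
    (hU : U ∈ Matrix.specialUnitaryGroup (Fin 2) ℂ)
    (hV : V ∈ Matrix.specialUnitaryGroup (Fin 2) ℂ)
    (hM : 1 < opn (↑g))
    (hg : (↑g : Matrix (Fin 2) (Fin 2) ℂ) =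
      U * Matrix.diagonal ![((opn (↑g) : ℝ) : ℂ), (((opn (↑g))⁻¹ : ℝ) : ℂ)] * V)
    (ε : ℝ) (hε0 : 0 < ε) (hε1 : ε < 1)
    (z w : C2) (hz : z ≠ 0) (hw : w ≠ 0)
    (hzY : ε < dCP z (mulVecE V⁻¹ e2)) (hwY : ε < dCP w (mulVecE V⁻¹ e2)) :
    dCP (mulVecE (↑g) z) (mulVecE (↑g) w) ≤ ε⁻¹ ^ 2 * ((opn (↑g)) ^ 2)⁻¹ * dCP z w ∧
    dCP (mulVecE U e1) (mulVecE (↑g) z) ≤ ε⁻¹ * ((opn (↑g)) ^ 2)⁻¹ :=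
  stmt_3_general g U V hU hV hM hg ε hε0 z w hzY hwY
end
end

section
/- Let ψ : ℂP¹ → ℂ ∪ {∞} be defined by ψ(zℂ) = z₁/z₂ if z₂ ≠ 0 and ψ(zℂ) = ∞ if z₂ = 0, for (z₁,z₂) = z ∈ ℂ² \ {0}. Then for every R > 0: (i) ψ⁻¹({z ∈ ℂ : |z| < R}) = ℂP¹ \ B(e₁ℂ, (1+R²)^{-1/2}); (ii) for all z, z' ∈ ℂ with |z|, |z'| < R, (1+R²)⁻¹ |z - z'| ≤ d(ψ⁻¹(z), ψ⁻¹(z')) ≤ |z - z'|; (iii) consequently, for all wℂ, w'ℂ ∈ ℂP¹ \ B(e₁ℂ, 1/R), d(wℂ, w'ℂ) ≤ |ψ(wℂ) - ψ(w'ℂ)| ≤ (1+R²) d(wℂ, w'ℂ). -/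
noncomputable section

/-! Away from the line `ℂ e₁`, every representative `w` may be rescaled to `(ψ w, 1)`, and
`dCP` is invariant under rescaling of either argument. On such normalized representatives
`dCP (z, 1) (z', 1) = |z - z'| / (√(1 + |z|²) √(1 + |z'|²))` and `dCP (z, 1) e₁ = 1 / √(1 + |z|²)`,
so everything reduces to bounding `√(1 + |z|²)` between `1` and `√(1 + R²)`. -/

open Real

lemma norm_C2 (w : C2) : ‖w‖ = √(‖w 0‖ ^ 2 + ‖w 1‖ ^ 2) := by
  rw [EuclideanSpace.norm_eq, Fin.sum_univ_two]

lemma dCP_comm (z w : C2) : dCP z w = dCP w z := by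
  unfold dCP
  rw [norm_sub_rev, mul_comm (z 0), mul_comm (z 1), mul_comm ‖z‖]

lemma dCP_smul_left {c : ℂ} (hc : c ≠ 0) (z w : C2) : dCP (c • z) w = dCP z w := by
  unfold dCP
  simp only [PiLp.smul_apply, smul_eq_mul, norm_smul]
  rw [show c * z 0 * w 1 - c * z 1 * w 0 = c * (z 0 * w 1 - z 1 * w 0) by ring, norm_mul,
    mul_assoc]
  exact mul_div_mul_left _ _ (norm_ne_zero_iff.mpr hc)

lemma dCP_smul_right {c : ℂ} (hc : c ≠ 0) (z w : C2) : dCP z (c • w) = dCP z w := by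
  rw [dCP_comm, dCP_smul_left hc, dCP_comm]

lemma eq_smul_toLp_div (w : C2) (h : w 1 ≠ 0) : w = w 1 • WithLp.toLp 2 ![w 0 / w 1, 1] := by
  ext i
  fin_cases i <;> simp [field]

lemma dCP_eq_dCP_toLp_div (w w' : C2) (h : w 1 ≠ 0) (h' : w' 1 ≠ 0) :
    dCP w w' = dCP (WithLp.toLp 2 ![w 0 / w 1, 1]) (WithLp.toLp 2 ![w' 0 / w' 1, 1]) := by
  conv_lhs => rw [eq_smul_toLp_div w h, eq_smul_toLp_div w' h']
  rw [dCP_smul_left h, dCP_smul_right h']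

lemma dCP_toLp (z z' : ℂ) : dCP (WithLp.toLp 2 ![z, 1]) (WithLp.toLp 2 ![z', 1]) =
    ‖z - z'‖ / (√(1 + ‖z‖ ^ 2) * √(1 + ‖z'‖ ^ 2)) := by
  simp [dCP, norm_C2, add_comm]

lemma dCP_toLp_e1 (z : ℂ) : dCP (WithLp.toLp 2 ![z, 1]) e1 = (√(1 + ‖z‖ ^ 2))⁻¹ := by
  simp [dCP, e1, norm_C2, add_comm]

lemma dCP_e1_of_snd_eq_zero {w : C2} (h : w 1 = 0) : dCP w e1 = 0 := by
  simp [dCP, e1, h]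

lemma inv_sqrt_one_add_sq_lt_iff {a b : ℝ} (ha : 0 ≤ a) (hb : 0 ≤ b) :
    (√(1 + b ^ 2))⁻¹ < (√(1 + a ^ 2))⁻¹ ↔ a < b := by
  rw [inv_lt_inv₀ (by positivity) (by positivity), sqrt_lt_sqrt_iff (by positivity),
    add_lt_add_iff_left, sq_lt_sq₀ ha hb]

lemma inv_sqrt_one_add_sq_lt_one_div {R : ℝ} (hR : 0 < R) : (√(1 + R ^ 2))⁻¹ < 1 / R := by
  rw [one_div, inv_lt_inv₀ (by positivity) hR, lt_sqrt hR.le]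
  linarith

lemma snd_ne_zero_and_norm_div_lt_iff {R : ℝ} (hR : 0 ≤ R) (w : C2) :
    (w 1 ≠ 0 ∧ ‖w 0 / w 1‖ < R) ↔ (√(1 + R ^ 2))⁻¹ < dCP w e1 := by
  by_cases h : w 1 = 0
  · rw [dCP_e1_of_snd_eq_zero h]
    simp only [h, ne_eq, not_true_eq_false, false_and, false_iff, not_lt]
    positivity
  · conv_rhs => rw [eq_smul_toLp_div w h, dCP_smul_left h, dCP_toLp_e1]
    rw [inv_sqrt_one_add_sq_lt_iff (norm_nonneg _) hR]
    exact and_iff_right h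

lemma dCP_toLp_le_norm_sub (z z' : ℂ) :
    dCP (WithLp.toLp 2 ![z, 1]) (WithLp.toLp 2 ![z', 1]) ≤ ‖z - z'‖ := by
  rw [dCP_toLp]
  refine div_le_self (norm_nonneg _) (one_le_mul_of_one_le_of_one_le ?_ ?_) <;>
    exact one_le_sqrt.mpr (by nlinarith [norm_nonneg z, norm_nonneg z'])

lemma inv_one_add_sq_mul_le_dCP_toLp {R : ℝ} {z z' : ℂ} (hz : ‖z‖ ≤ R) (hz' : ‖z'‖ ≤ R) :
    (1 + R ^ 2)⁻¹ * ‖z - z'‖ ≤ dCP (WithLp.toLp 2 ![z, 1]) (WithLp.toLp 2 ![z', 1]) := by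
  have hprod : √(1 + ‖z‖ ^ 2) * √(1 + ‖z'‖ ^ 2) ≤ 1 + R ^ 2 := by
    calc √(1 + ‖z‖ ^ 2) * √(1 + ‖z'‖ ^ 2) ≤ √(1 + R ^ 2) * √(1 + R ^ 2) := by gcongr
      _ = 1 + R ^ 2 := mul_self_sqrt (by positivity)
  rw [dCP_toLp, inv_mul_eq_div]
  gcongr

/-- Properties of the chart ψ(zℂ) = z₁/z₂ relating the metric on ℂP¹ to the Euclidean
metric on ℂ: (i) ψ⁻¹{|z| < R} is the complement of the closed ball B(e₁ℂ, (1+R²)^(-1/2));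
(ii) ψ⁻¹ is bi-Lipschitz on {|z| < R} with constants 1 and (1+R²)⁻¹;
(iii) ψ is bi-Lipschitz outside B(e₁ℂ, 1/R) with constants 1 and (1+R²). -/
theorem stmt_4 (R : ℝ) (hR : 0 < R) :
    (∀ w : C2, w ≠ 0 →
      ((w 1 ≠ 0 ∧ ‖w 0 / w 1‖ < R) ↔ (Real.sqrt (1 + R ^ 2))⁻¹ < dCP w e1)) ∧
    (∀ z z' : ℂ, ‖z‖ < R → ‖z'‖ < R →
      (1 + R ^ 2)⁻¹ * ‖z - z'‖ ≤ dCP (WithLp.toLp 2 ![z, 1]) (WithLp.toLp 2 ![z', 1]) ∧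
      dCP (WithLp.toLp 2 ![z, 1]) (WithLp.toLp 2 ![z', 1]) ≤ ‖z - z'‖) ∧
    (∀ w w' : C2, w ≠ 0 → w' ≠ 0 → 1 / R < dCP w e1 → 1 / R < dCP w' e1 →
      dCP w w' ≤ ‖w 0 / w 1 - w' 0 / w' 1‖ ∧
      ‖w 0 / w 1 - w' 0 / w' 1‖ ≤ (1 + R ^ 2) * dCP w w') := by
  have part_i := snd_ne_zero_and_norm_div_lt_iff hR.le
  have part_ii (z z' : ℂ) (hz : ‖z‖ < R) (hz' : ‖z'‖ < R) :=
    And.intro (inv_one_add_sq_mul_le_dCP_toLp hz.le hz'.le) (dCP_toLp_le_norm_sub z z')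
  refine ⟨fun w _ ↦ part_i w, part_ii, fun w w' _ _ hw hw' ↦ ?_⟩
  obtain ⟨h, hlt⟩ := (part_i w).mpr ((inv_sqrt_one_add_sq_lt_one_div hR).trans hw)
  obtain ⟨h', hlt'⟩ := (part_i w').mpr ((inv_sqrt_one_add_sq_lt_one_div hR).trans hw')
  rw [dCP_eq_dCP_toLp_div w w' h h']
  obtain ⟨hlower, hupper⟩ := part_ii _ _ hlt hlt'
  exact ⟨hupper, (inv_mul_le_iff₀ (by positivity)).mp hlower⟩
end
end
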